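/- arXiv:1912.00452 — 3 statements merged into one kernel-verified Lean document; each statement's English description precedes it below -/
import Mathlib

section
/- Let n be a power of 2, let k < n, and let f ∈ R[x] be a polynomial over a commutative ring R. Then (S_{n−1−k}·x^k) ⊙ (S̄_k·f) = σ ⊙ ((S_{n−1−k}·x^k) ⊙ (S_k·f̄)), where f̄ = σ ⊙ f; that is, the two sides have the same coefficient of x^m for every m. -/
/-- The signed Thue–Morse sequence: `σ n = (-1)^(Hamming weight of n)`. -/
noncomputable def sgn (R : Type*) [CommRing R] (n : ℕ) : R := (-1) ^ (Nat.digits 2 n).sum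

/-- The Sierpiński polynomial `S m = ∏_{j≥0} (1 + X^(2^j))^(d_j m)` where `d_j m` is the
`j`-th binary digit of `m`. -/
noncomputable def Sier (R : Type*) [CommRing R] (m : ℕ) : Polynomial R :=
  ∏ j ∈ Finset.range (m + 1), if m.testBit j then 1 + Polynomial.X ^ (2 ^ j) else 1

/-- The signed Sierpiński polynomial `S̄ m = ∏_{j≥0} (1 - X^(2^j))^(d_j m)`. -/
noncomputable def SierBar (R : Type*) [CommRing R] (m : ℕ) : Polynomial R :=
  ∏ j ∈ Finset.range (m + 1), if m.testBit j then 1 - Polynomial.X ^ (2 ^ j) else 1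

/-- Termwise (Hadamard) product of polynomials. -/
noncomputable def hadP {R : Type*} [CommRing R] (p q : Polynomial R) : Polynomial R :=
  ∑ n ∈ p.support, Polynomial.C (p.coeff n * q.coeff n) * Polynomial.X ^ n

/-- `σ ⊙ p`: termwise product of a polynomial with the signed Thue–Morse sequence. -/
noncomputable def barP {R : Type*} [CommRing R] (p : Polynomial R) : Polynomial R :=
  ∑ n ∈ p.support, Polynomial.C (sgn R n * p.coeff n) * Polynomial.X ^ n

/-!
Identify `m : ℕ` with its set `B m` of binary digits, so that `m = ∑ i ∈ B m, 2 ^ i` and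
`σ m = (-1) ^ #(B m)`. Expanding the products gives `S k = ∑ t ⊆ B k, x ^ (∑ i ∈ t, 2 ^ i)` and
`S̄ k = ∑ t ⊆ B k, (-1) ^ #t x ^ (∑ i ∈ t, 2 ^ i)`. As `n` is a power of two, `B (n - 1 - k)` is
the complement of `B k` in `{0, …, log₂ n - 1}`, so `S (n - 1 - k) * x ^ k` is supported on those
`m` with `B k ⊆ B m`. For such `m` and `t ⊆ B k`, the exponent `m - ∑ i ∈ t, 2 ^ i` has digit set
`B m \ t`, and `(-1) ^ #t = (-1) ^ #(B m) * (-1) ^ #(B m \ t)` matches the two sides term by term.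
-/

open Polynomial Finset

theorem Nat.sum_digits_two_eq_length_bitIndices (n : ℕ) :
    (Nat.digits 2 n).sum = n.bitIndices.length := by
  induction n using Nat.binaryRec with
  | zero => simp
  | bit b n ih =>
    rcases n.eq_zero_or_pos with rfl | hn
    · cases b <;> simp
    cases b
    · rw [Nat.bit_false_apply, Nat.bitIndices_two_mul, Nat.digits_def' (by norm_num) (by omega)]
      simp [ih]
    · rw [Nat.bit_true_apply, Nat.bitIndices_two_mul_add_one,
        Nat.digits_def' (by norm_num) (by omega), show (2 * n + 1) / 2 = n by omega,
        show (2 * n + 1) % 2 = 1 by omega]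
      simp [ih, add_comm]

theorem two_pow_sub_one_sub_eq_sum (T k : ℕ) (hk : k < 2 ^ T) :
    2 ^ T - 1 - k = ∑ i ∈ range T \ k.bitIndices.toFinset, 2 ^ i := by
  have hsub : k.bitIndices.toFinset ⊆ range T := fun i hi => by
    rw [mem_range, ← Nat.pow_lt_pow_iff_right (by norm_num : 1 < 2)]
    exact (Nat.two_pow_le_of_mem_bitIndices (List.mem_toFinset.1 hi)).trans_lt hk
  have hsum := sum_sdiff hsub (f := fun i => 2 ^ i)
  rw [sum_toFinset_bitIndices_two_pow, Nat.geomSum_eq le_rfl] at hsum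
  omega

theorem prod_range_succ_ite_testBit {M : Type*} [CommMonoid M] (m : ℕ) (g : ℕ → M) :
    ∏ j ∈ range (m + 1), (if m.testBit j then g j else 1) = ∏ j ∈ m.bitIndices.toFinset, g j := by
  rw [← prod_filter]
  congr 1
  ext j
  simp only [mem_filter, mem_range, List.mem_toFinset, Nat.mem_bitIndices, and_iff_right_iff_imp]
  exact fun h => Nat.lt_succ_of_le (j.lt_two_pow_self.le.trans (Nat.ge_two_pow_of_testBit h))

section

variable {R : Type*} [CommRing R]

theorem sgn_sum_two_pow (s : Finset ℕ) :
    sgn R (∑ i ∈ s, 2 ^ i) = (-1) ^ #s := by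
  rw [sgn, Nat.sum_digits_two_eq_length_bitIndices,
    ← List.toFinset_card_of_nodup Nat.bitIndices_nodup, toFinset_bitIndices_sum_two_pow]

theorem prod_one_add_C_mul_X_two_pow (c : R) (s : Finset ℕ) :
    ∏ j ∈ s, (1 + C c * X ^ 2 ^ j) = ∑ t ∈ s.powerset, C (c ^ #t) * X ^ (∑ i ∈ t, 2 ^ i) := by
  simp only [prod_one_add, prod_mul_distrib, prod_const, map_pow, prod_pow_eq_pow_sum]

theorem sier_eq_sum_powerset (m : ℕ) :
    Sier R m = ∑ t ∈ m.bitIndices.toFinset.powerset, X ^ (∑ i ∈ t, 2 ^ i) := by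
  rw [Sier, prod_range_succ_ite_testBit]
  simpa using prod_one_add_C_mul_X_two_pow (1 : R) m.bitIndices.toFinset

theorem sierBar_eq_sum_powerset (m : ℕ) :
    SierBar R m = ∑ t ∈ m.bitIndices.toFinset.powerset, C ((-1) ^ #t) * X ^ (∑ i ∈ t, 2 ^ i) := by
  rw [SierBar, prod_range_succ_ite_testBit, ← prod_one_add_C_mul_X_two_pow]
  simp [sub_eq_add_neg]

theorem coeff_sier (m i : ℕ) :
    (Sier R m).coeff i = if i.bitIndices.toFinset ⊆ m.bitIndices.toFinset then 1 else 0 := by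
  conv_lhs => rw [sier_eq_sum_powerset, ← sum_toFinset_bitIndices_two_pow i]
  have hinj := geomSum_injective (n := 2) le_rfl
  simp only [finsetSum_coeff, coeff_X_pow, hinj.eq_iff, sum_ite_eq, mem_powerset]

theorem coeff_hadP (p q : R[X]) (n : ℕ) :
    (hadP p q).coeff n = p.coeff n * q.coeff n := by
  simp only [hadP, finsetSum_coeff, coeff_C_mul_X_pow, sum_ite_eq]
  split_ifs with h
  · rfl
  · rw [notMem_support_iff.1 h, zero_mul]

theorem coeff_barP (p : R[X]) (n : ℕ) :
    (barP p).coeff n = sgn R n * p.coeff n := by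
  simp only [barP, finsetSum_coeff, coeff_C_mul_X_pow, sum_ite_eq]
  split_ifs with h
  · rfl
  · rw [notMem_support_iff.1 h, mul_zero]

theorem coeff_sierBar_mul_of_subset {s A : Finset ℕ} (hsA : s ⊆ A) (f : R[X]) :
    (SierBar R (∑ i ∈ s, 2 ^ i) * f).coeff (∑ i ∈ A, 2 ^ i) =
      sgn R (∑ i ∈ A, 2 ^ i) * (Sier R (∑ i ∈ s, 2 ^ i) * barP f).coeff (∑ i ∈ A, 2 ^ i) := by
  simp only [sierBar_eq_sum_powerset, sier_eq_sum_powerset, toFinset_bitIndices_sum_two_pow,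
    sum_mul, finsetSum_coeff, mul_assoc, coeff_C_mul, coeff_X_pow_mul', coeff_barP, mul_sum]
  refine sum_congr rfl fun t ht => ?_
  have htA : t ⊆ A := (mem_powerset.1 ht).trans hsA
  have hsub : ∑ i ∈ A, 2 ^ i - ∑ i ∈ t, 2 ^ i = ∑ i ∈ A \ t, 2 ^ i := by
    rw [← sum_sdiff htA, Nat.add_sub_cancel]
  have hcard : #A = #t + #(A \ t) := by rw [add_comm, card_sdiff_add_card_eq_card htA]
  rw [if_pos (sum_le_sum_of_subset htA), if_pos (sum_le_sum_of_subset htA), hsub, sgn_sum_two_pow,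
    sgn_sum_two_pow, hcard, pow_add, mul_assoc, ← mul_assoc ((-1) ^ #(A \ t)), ← pow_add,
    Even.neg_one_pow ⟨_, rfl⟩, one_mul]

end

/-- For n a power of 2, k < n and f a polynomial,
(S (n-1-k) * x^k) ⊙ (SBar k * f) = σ ⊙ ((S (n-1-k) * x^k) ⊙ (S k * (σ ⊙ f))). -/
theorem hadamard_sierbar_eq_bar_hadamard_sier (R : Type*) [CommRing R] (n k : ℕ)
    (hn : ∃ t : ℕ, n = 2 ^ t) (hk : k < n) (f : Polynomial R) :
    hadP (Sier R (n - 1 - k) * Polynomial.X ^ k) (SierBar R k * f) =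
      barP (hadP (Sier R (n - 1 - k) * Polynomial.X ^ k) (Sier R k * barP f)) := by
  obtain ⟨T, rfl⟩ := hn
  ext m
  rw [coeff_hadP, coeff_barP, coeff_hadP, coeff_mul_X_pow', coeff_sier,
    two_pow_sub_one_sub_eq_sum T k hk, toFinset_bitIndices_sum_two_pow]
  split_ifs with hkm hsub
  · set s := k.bitIndices.toFinset
    set u := (m - k).bitIndices.toFinset
    have hks : k = ∑ i ∈ s, 2 ^ i := (sum_toFinset_bitIndices_two_pow k).symm
    have hm : m = ∑ i ∈ u ∪ s, 2 ^ i := by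
      rw [sum_union (disjoint_of_subset_left hsub sdiff_disjoint), sum_toFinset_bitIndices_two_pow,
        ← hks, Nat.sub_add_cancel hkm]
    rw [hks, hm, coeff_sierBar_mul_of_subset subset_union_right, one_mul, one_mul]
  all_goals simp
end

section
/- Let f and g be formal power series over a commutative ring R. Then for every m ∈ ℕ, the coefficient of x^m in f·g equals Σ_{k=0}^{m} σ_k · [ δ_k · ( (x^k·δ_k) ⊙ (S_k·f̄) ⊙ (S_k·ḡ) ) ][m], where f̄ = σ ⊙ f, ḡ = σ ⊙ g, and [h][m] denotes the coefficient of x^m in h (summands with k > m have zero coefficient of x^m, so the infinite sum truncates). -/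
/-- `δ k`: the power series whose `m`-th coefficient is `1` if `m AND k = 0`, else `0`. -/
noncomputable def delta (R : Type*) [CommRing R] (k : ℕ) : PowerSeries R :=
  PowerSeries.mk fun m => if m &&& k = 0 then 1 else 0

/-- Termwise (Hadamard) product of power series. -/
noncomputable def hadS {R : Type*} [CommRing R] (f g : PowerSeries R) : PowerSeries R :=
  PowerSeries.mk fun n => PowerSeries.coeff n f * PowerSeries.coeff n g

/-- `σ ⊙ f`: termwise product of a power series with the signed Thue–Morse sequence. -/
noncomputable def barS {R : Type*} [CommRing R] (f : PowerSeries R) : PowerSeries R :=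
  PowerSeries.mk fun n => sgn R n * PowerSeries.coeff n f

/-! On binary digits write `x ⊆ y` for `x &&& y = x`. Expanding all coefficients, the right-hand
side is `∑ a c, w a c * σ a * f[a] * σ c * g[c]`, where `w a c` is the sum of `σ k` over the pairs
`(q, k)` with `k ⊆ q`, `(m - q) &&& k = 0` and `q - a, q - c ⊆ k`. For fixed `q` these `k` form an
interval `[L, U]` of the Boolean lattice, and `∑ k ∈ [L, U], σ k` is `σ L` if `L = U` and `0`
otherwise, since flipping one digit of `U` outside `L` reverses the sign. What remains is a sum of
`σ q` over the `q ⊇ a ||| c` with `q &&& (m - q) = a &&& c`; these form an interval again, which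
is a single point exactly when `a + c = m`. Hence `w a c = σ a * σ c * [a + c = m]`. -/

open Finset PowerSeries

namespace Nat

theorem add_eq_xor_add_two_mul_and (x y : ℕ) : x + y = (x ^^^ y) + 2 * (x &&& y) := by
  induction x using binaryRec generalizing y with
  | zero => simp
  | bit a x ih =>
    have := ih y.div2
    rw [← bit_bodd_div2 y, xor_bit, land_bit]
    cases a <;> cases y.bodd <;> simp only [bit_val] <;> simp <;> omega

theorem add_eq_xor_of_and_eq_zero {x y : ℕ} (h : x &&& y = 0) : x + y = x ^^^ y := by
  rw [add_eq_xor_add_two_mul_and, h, mul_zero, add_zero]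

theorem add_eq_or_of_and_eq_zero {x y : ℕ} (h : x &&& y = 0) : x + y = x ||| y := by
  rw [add_eq_xor_of_and_eq_zero h]
  simp only [eq_iff_testBit_eq, testBit_and, testBit_or, testBit_xor, zero_testBit] at h ⊢
  grind

theorem sub_eq_xor_of_and_eq {x y : ℕ} (h : x &&& y = x) : y - x = y ^^^ x := by
  have hx : x &&& (y ^^^ x) = 0 := by
    simp only [eq_iff_testBit_eq, testBit_and, testBit_xor, zero_testBit] at h ⊢
    grind
  have := add_eq_xor_of_and_eq_zero hx
  rw [Nat.xor_comm y x, xor_xor_cancel_left] at this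
  rw [Nat.xor_comm]
  omega

theorem le_of_and_eq {x y : ℕ} (h : x &&& y = x) : x ≤ y := h ▸ and_le_right

theorem and_eq_left_iff_le_and_sub_and_eq_zero {k q : ℕ} :
    k &&& q = k ↔ k ≤ q ∧ (q - k) &&& k = 0 := by
  refine ⟨fun h => ⟨le_of_and_eq h, ?_⟩, fun ⟨hle, h⟩ => ?_⟩
  · rw [sub_eq_xor_of_and_eq h]
    simp only [eq_iff_testBit_eq, testBit_and, testBit_xor, zero_testBit] at h ⊢
    grind
  · have hq : q = (q - k) ^^^ k := by rw [← add_eq_xor_of_and_eq_zero h]; omega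
    generalize q - k = d at h hq
    subst hq
    simp only [eq_iff_testBit_eq, testBit_and, testBit_xor, zero_testBit] at h ⊢
    grind

theorem le_and_sub_and_eq_iff {a q k : ℕ} (hk : k &&& q = k) :
    (a ≤ q ∧ (q - a) &&& k = q - a) ↔ (a &&& q = a ∧ (q ^^^ a) &&& k = q ^^^ a) := by
  refine ⟨fun ⟨ha, h⟩ => ?_, fun ⟨ha, h⟩ => ?_⟩
  · have hd : (q - a) &&& q = q - a := by rw [← h, Nat.and_assoc, hk]
    have hqa : a = q ^^^ (q - a) := by rw [← sub_eq_xor_of_and_eq hd]; omega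
    generalize q - a = d at h hd hqa
    subst hqa
    simp only [eq_iff_testBit_eq, testBit_and, testBit_xor] at h hd hk ⊢
    grind
  · rw [sub_eq_xor_of_and_eq ha]
    exact ⟨le_of_and_eq ha, h⟩

theorem and_sub_eq_iff {e t q : ℕ} (het : t &&& e = 0) (hq : q ≤ 2 * e + t) :
    q &&& (2 * e + t - q) = e ↔ e &&& q = e ∧ q &&& (e ||| t) = q := by
  constructor
  · intro h
    have hsum := add_eq_xor_add_two_mul_and q (2 * e + t - q)
    have hx : q ^^^ (2 * e + t - q) = t := by omega
    generalize 2 * e + t - q = r at h hx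
    subst h hx
    simp only [eq_iff_testBit_eq, testBit_and, testBit_or, testBit_xor]
    grind
  · intro h
    have hx : q ^^^ (e ||| (t ^^^ q)) = t ∧ q &&& (e ||| (t ^^^ q)) = e := by
      simp only [eq_iff_testBit_eq, testBit_and, testBit_or, testBit_xor, zero_testBit] at het h ⊢
      grind
    have hsum := add_eq_xor_add_two_mul_and q (e ||| (t ^^^ q))
    rw [show 2 * e + t - q = e ||| (t ^^^ q) by omega, hx.2]

end Nat

/-- The coefficients `δ_k[m - q]`, `(X^k δ_k)[q]`, `S_k[q - a]` and `S_k[q - c]` that meet in the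
coefficient of `X^m` of the `k`-th summand are all nonzero. -/
abbrev SummandIndex (m k q a c : ℕ) : Prop :=
  (m - q) &&& k = 0 ∧ k &&& q = k ∧ (a ≤ q ∧ (q - a) &&& k = q - a) ∧
    (c ≤ q ∧ (q - c) &&& k = q - c)

section Sign

variable (R : Type*) [CommRing R]

theorem sgn_bit (b : Bool) (n : ℕ) : sgn R (Nat.bit b n) = (-1) ^ b.toNat * sgn R n := by
  rcases eq_or_ne (Nat.bit b n) 0 with h | h
  · obtain ⟨rfl, rfl⟩ : b = false ∧ n = 0 := by cases b <;> simp_all [Nat.bit_val]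
    simp [sgn]
  · rw [sgn, Nat.digits_def' one_lt_two (Nat.pos_of_ne_zero h), List.sum_cons, pow_add,
      Nat.bit_mod_two, Nat.bit_div_two, sgn]

theorem sgn_xor (x y : ℕ) : sgn R (x ^^^ y) = sgn R x * sgn R y := by
  induction x using Nat.binaryRec generalizing y with
  | zero => simp [sgn]
  | bit a x ih =>
    rw [← Nat.bit_bodd_div2 y, Nat.xor_bit, sgn_bit, sgn_bit, sgn_bit, ih]
    cases a <;> cases y.bodd <;> simp

theorem sgn_mul_self (n : ℕ) : sgn R n * sgn R n = 1 := by
  rw [sgn, ← pow_add, Even.neg_one_pow ⟨_, rfl⟩]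

theorem sgn_two_pow (i : ℕ) : sgn R (2 ^ i) = -1 := by
  induction i with
  | zero => simp [sgn]
  | succ i ih => simpa [Nat.bit_val, pow_succ, mul_comm, ih] using sgn_bit R false (2 ^ i)

theorem sum_range_sgn_submask_interval {N L U : ℕ} (hU : U ≤ N) :
    ∑ k ∈ range (N + 1), (if L &&& k = L ∧ k &&& U = k then sgn R k else 0) =
      if L = U then sgn R L else 0 := by
  by_cases hi : ∃ i, U.testBit i ∧ L.testBit i = false
  · obtain ⟨i, hUi, hLi⟩ := hi
    have hne : L ≠ U := by rintro rfl; simp_all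
    have hflip : ∀ k, (L &&& (k ^^^ 2 ^ i) = L ∧ (k ^^^ 2 ^ i) &&& U = k ^^^ 2 ^ i) ↔
        (L &&& k = L ∧ k &&& U = k) := by
      intro k
      simp only [Nat.eq_iff_testBit_eq, Nat.testBit_and, Nat.testBit_xor, Nat.testBit_two_pow]
      grind
    rw [if_neg hne, ← sum_filter]
    refine sum_involution (fun k _ => k ^^^ 2 ^ i)
      (fun k _ => by rw [sgn_xor, sgn_two_pow]; ring) (fun k _ _ h => ?_) (fun k hk => ?_)
      (fun k _ => Nat.xor_xor_cancel_right k _)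
    · simpa using congrArg (Nat.testBit · i) h
    · rw [mem_filter] at hk ⊢
      have hk' := (hflip k).2 hk.2
      exact ⟨mem_range_succ_iff.2 ((Nat.le_of_and_eq hk'.2).trans hU), hk'⟩
  · have hcond : ∀ k, (L &&& k = L ∧ k &&& U = k) ↔ (k = L ∧ L = U) := by
      intro k
      simp only [not_exists, not_and, Bool.not_eq_false] at hi
      simp only [Nat.eq_iff_testBit_eq, Nat.testBit_and]
      grind
    simp only [hcond, ite_and]
    split_ifs with h
    · subst h
      rw [sum_ite_eq', if_pos (mem_range_succ_iff.2 hU)]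
    · simp

theorem sum_range_sgn_of_and_eq_zero_of_sub_and_eq {N q : ℕ} (hq : q ≤ N) (r a c : ℕ) :
    ∑ k ∈ range (N + 1), (if r &&& k = 0 ∧ k &&& q = k ∧ (a ≤ q ∧ (q - a) &&& k = q - a) ∧
        (c ≤ q ∧ (q - c) &&& k = q - c) then sgn R k else 0) =
      if a &&& q = a ∧ c &&& q = c ∧ q &&& r = a &&& c then sgn R q * sgn R (a &&& c) else 0 := by
  by_cases hac : a &&& q = a ∧ c &&& q = c
  · have hcond : ∀ k, (r &&& k = 0 ∧ k &&& q = k ∧ (a ≤ q ∧ (q - a) &&& k = q - a) ∧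
        (c ≤ q ∧ (q - c) &&& k = q - c)) ↔
        (q ^^^ (a &&& c)) &&& k = q ^^^ (a &&& c) ∧ k &&& (q ^^^ (q &&& r)) = k := by
      intro k
      by_cases hk : k &&& q = k
      · rw [Nat.le_and_sub_and_eq_iff hk, Nat.le_and_sub_and_eq_iff hk]
        simp only [Nat.eq_iff_testBit_eq, Nat.testBit_and, Nat.testBit_xor, Nat.zero_testBit]
          at hac hk ⊢
        grind
      · simp only [hk, false_and, and_false, false_iff]
        simp only [Nat.eq_iff_testBit_eq, Nat.testBit_and, Nat.testBit_xor] at hk ⊢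
        grind
    have hU : q ^^^ (q &&& r) ≤ N := by
      refine le_trans (Nat.le_of_and_eq ?_) hq
      simp only [Nat.eq_iff_testBit_eq, Nat.testBit_and, Nat.testBit_xor]
      grind
    rw [sum_congr rfl fun k _ => if_congr (hcond k) rfl rfl, sum_range_sgn_submask_interval R hU]
    simp only [hac, true_and, Nat.xor_right_inj, sgn_xor, eq_comm]
  · rw [if_neg fun h => hac ⟨h.1, h.2.1⟩]
    refine sum_eq_zero fun k _ => if_neg ?_
    rintro ⟨-, hk, ha, hc⟩
    exact hac ⟨((Nat.le_and_sub_and_eq_iff hk).1 ha).1, ((Nat.le_and_sub_and_eq_iff hk).1 hc).1⟩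

theorem sum_range_sgn_of_and_sub_eq (a c m : ℕ) :
    ∑ q ∈ range (m + 1), (if a &&& q = a ∧ c &&& q = c ∧ q &&& (m - q) = a &&& c
        then sgn R q else 0) = if a + c = m then sgn R (a ||| c) else 0 := by
  have hadd := Nat.add_eq_xor_add_two_mul_and a c
  by_cases ht : ∃ t, t &&& (a &&& c) = 0 ∧ m = 2 * (a &&& c) + t
  · obtain ⟨t, het, rfl⟩ := ht
    have hxor : a ||| c = (a &&& c) ||| t ↔ a ^^^ c = t := by
      simp only [Nat.eq_iff_testBit_eq, Nat.testBit_and, Nat.testBit_or, Nat.testBit_xor,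
        Nat.zero_testBit] at het ⊢
      grind
    have hU : (a &&& c) ||| t ≤ 2 * (a &&& c) + t := by
      rw [← Nat.add_eq_or_of_and_eq_zero (by rwa [Nat.and_comm])]
      omega
    have hcond : ∀ q ∈ range (2 * (a &&& c) + t + 1),
        (a &&& q = a ∧ c &&& q = c ∧ q &&& (2 * (a &&& c) + t - q) = a &&& c) ↔
          (a ||| c) &&& q = a ||| c ∧ q &&& ((a &&& c) ||| t) = q := by
      intro q hq
      rw [Nat.and_sub_eq_iff het (mem_range_succ_iff.1 hq)]
      simp only [Nat.eq_iff_testBit_eq, Nat.testBit_and, Nat.testBit_or, Nat.zero_testBit] at het ⊢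
      grind
    rw [sum_congr rfl fun q hq => if_congr (hcond q hq) rfl rfl,
      sum_range_sgn_submask_interval R hU]
    refine if_congr (hxor.trans ?_) rfl rfl
    omega
  · rw [if_neg fun h => ht ⟨a ^^^ c, ?_, by omega⟩]
    · refine sum_eq_zero fun q hq => if_neg fun ⟨_, _, h⟩ => ht ⟨q ^^^ (m - q), ?_, ?_⟩
      · rw [← h]
        simp only [Nat.eq_iff_testBit_eq, Nat.testBit_and, Nat.testBit_xor, Nat.zero_testBit]
        grind
      · have := Nat.add_eq_xor_add_two_mul_and q (m - q)
        have := mem_range_succ_iff.1 hq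
        omega
    · simp only [Nat.eq_iff_testBit_eq, Nat.testBit_and, Nat.testBit_xor, Nat.zero_testBit]
      grind

theorem sum_sum_sgn_of_summandIndex (a c m : ℕ) :
    ∑ q ∈ range (m + 1), ∑ k ∈ range (m + 1),
      (if SummandIndex m k q a c then sgn R k else 0) =
      if a + c = m then sgn R a * sgn R c else 0 := by
  have hor : a ||| c = (a ^^^ c) ^^^ (a &&& c) := by
    simp only [Nat.eq_iff_testBit_eq, Nat.testBit_and, Nat.testBit_or, Nat.testBit_xor]
    grind
  calc _ = ∑ q ∈ range (m + 1), (if a &&& q = a ∧ c &&& q = c ∧ q &&& (m - q) = a &&& c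
        then sgn R q else 0) * sgn R (a &&& c) :=
      sum_congr rfl fun q hq => by
        rw [sum_range_sgn_of_and_eq_zero_of_sub_and_eq R (mem_range_succ_iff.1 hq), ite_mul,
          zero_mul]
    _ = _ := by
      rw [← sum_mul, sum_range_sgn_of_and_sub_eq, ite_mul, zero_mul, hor, sgn_xor, sgn_xor,
        mul_assoc, sgn_mul_self, mul_one]

end Sign

section Coefficients

variable {R : Type*} [CommRing R]

theorem coeff_Sier (k n : ℕ) : (Sier R k).coeff n = if n &&& k = n then 1 else 0 := by
  classical
  have hS : Sier R k = ∑ t ∈ ((range (k + 1)).filter (k.testBit ·)).powerset,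
      Polynomial.X ^ (∑ j ∈ t, 2 ^ j) := by
    rw [Sier, ← prod_filter, prod_one_add]
    simp_rw [prod_pow_eq_pow_sum]
  have hbits : ∀ t : Finset ℕ, n = ∑ j ∈ t, 2 ^ j ↔ t = Finset.equivBitIndices n :=
    fun t => Finset.equivBitIndices.eq_symm_apply.trans eq_comm
  simp_rw [hS, Polynomial.finsetSum_coeff, Polynomial.coeff_X_pow, hbits, sum_ite_eq']
  refine if_congr ?_ rfl rfl
  simp only [mem_powerset, subset_iff, Finset.equivBitIndices_apply, List.mem_toFinset,
    Nat.mem_bitIndices, mem_filter, mem_range, Nat.eq_iff_testBit_eq, Nat.testBit_and]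
  refine ⟨fun h i => by grind, fun h i hi => ⟨?_, by grind⟩⟩
  have := Nat.ge_two_pow_of_testBit (by grind : k.testBit i)
  have := Nat.lt_two_pow_self (n := i)
  omega

theorem coeff_X_pow_mul_delta (k q : ℕ) :
    coeff q (X ^ k * delta R k) = if k &&& q = k then 1 else 0 := by
  simp only [coeff_X_pow_mul', delta, coeff_mk, Nat.and_eq_left_iff_le_and_sub_and_eq_zero]
  by_cases hk : k ≤ q <;> simp [hk]

theorem coeff_Sier_mul (φ : PowerSeries R) (k : ℕ) {q N : ℕ} (hq : q ≤ N) :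
    coeff q ((Sier R k : PowerSeries R) * φ) =
      ∑ a ∈ range (N + 1), if a ≤ q ∧ (q - a) &&& k = q - a then coeff a φ else 0 := by
  rw [coeff_mul, ← Finset.Nat.sum_antidiagonal_swap]
  simp only [Prod.fst_swap, Prod.snd_swap]
  rw [Finset.Nat.sum_antidiagonal_eq_sum_range_succ
    (fun a j => coeff j (Sier R k : PowerSeries R) * coeff a φ)]
  simp only [Polynomial.coeff_coe, coeff_Sier, boole_mul]
  rw [← sum_subset (range_subset_range.2 (Nat.succ_le_succ hq))]
  · exact sum_congr rfl fun a ha => by simp [mem_range_succ_iff.1 ha]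
  · intro a _ ha
    simp_all

theorem coeff_delta_mul_hadS (f g : PowerSeries R) (k m : ℕ) :
    coeff m (delta R k * hadS (hadS (X ^ k * delta R k) ((Sier R k : PowerSeries R) * barS f))
      ((Sier R k : PowerSeries R) * barS g)) =
      ∑ q ∈ range (m + 1), ∑ a ∈ range (m + 1), ∑ c ∈ range (m + 1),
        if SummandIndex m k q a c then sgn R a * coeff a f * (sgn R c * coeff c g) else 0 := by
  rw [mul_comm, coeff_mul,
    Finset.Nat.sum_antidiagonal_eq_sum_range_succ (fun q r => coeff q _ * coeff r (delta R k))]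
  refine sum_congr rfl fun q hq => ?_
  have hq := mem_range_succ_iff.1 hq
  simp only [hadS, coeff_mk, coeff_X_pow_mul_delta, coeff_Sier_mul _ _ hq, mul_sum, sum_mul]
  rw [sum_comm]
  refine sum_congr rfl fun a _ => sum_congr rfl fun c _ => ?_
  simp only [delta, barS, coeff_mk, ite_mul, mul_ite, zero_mul, mul_zero, one_mul, mul_one,
    ← ite_and]
  exact if_congr (by tauto) (by ring) rfl

theorem coeff_mul_eq_sum_range_sum_range (f g : PowerSeries R) (m : ℕ) :
    coeff m (f * g) = ∑ a ∈ range (m + 1), ∑ c ∈ range (m + 1),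
      if a + c = m then coeff a f * coeff c g else 0 := by
  rw [coeff_mul, Finset.Nat.sum_antidiagonal_eq_sum_range_succ (fun a c => coeff a f * coeff c g)]
  refine sum_congr rfl fun a ha => ?_
  have ha := mem_range_succ_iff.1 ha
  rw [sum_eq_single_of_mem (m - a) (mem_range_succ_iff.2 (Nat.sub_le m a))
    fun c _ hc => if_neg (by omega), if_pos (by omega)]

end Coefficients

/-- For power series f, g and every m,
(f * g)[m] = Σ_{k=0}^{m} σ k * [δ k * ((x^k * δ k) ⊙ (S k * f̄) ⊙ (S k * ḡ))][m],
where f̄ = σ ⊙ f and ḡ = σ ⊙ g. -/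
theorem convolution_series_bar (R : Type*) [CommRing R] (f g : PowerSeries R) (m : ℕ) :
    PowerSeries.coeff m (f * g) =
      ∑ k ∈ Finset.range (m + 1), sgn R k *
        PowerSeries.coeff m (delta R k *
          hadS (hadS (PowerSeries.X ^ k * delta R k) ((Sier R k : PowerSeries R) * barS f))
            ((Sier R k : PowerSeries R) * barS g)) := by
  have hsgn (a c : ℕ) : sgn R a * sgn R c * (sgn R a * coeff a f * (sgn R c * coeff c g)) =
      coeff a f * coeff c g := by
    linear_combination (sgn R c * sgn R c * coeff a f * coeff c g) * sgn_mul_self R a +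
      (coeff a f * coeff c g) * sgn_mul_self R c
  simp only [coeff_delta_mul_hadS, mul_sum, mul_ite, mul_zero]
  calc coeff m (f * g)
      = ∑ a ∈ range (m + 1), ∑ c ∈ range (m + 1), ∑ q ∈ range (m + 1), ∑ k ∈ range (m + 1),
          (if SummandIndex m k q a c then sgn R k else 0) *
            (sgn R a * coeff a f * (sgn R c * coeff c g)) := by
        refine (coeff_mul_eq_sum_range_sum_range f g m).trans
          (sum_congr rfl fun a _ => sum_congr rfl fun c _ => ?_)
        simp only [← sum_mul]
        rw [sum_sum_sgn_of_summandIndex, ite_mul, zero_mul, hsgn]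
    _ = _ := by
        simp only [ite_mul, zero_mul]
        -- reorder the summation from `a, c, q, k` to `k, q, a, c`
        exact ((sum_congr rfl fun a _ => (sum_congr rfl fun c _ => sum_comm).trans sum_comm).trans
          sum_comm).trans
          (sum_congr rfl fun k _ => (sum_congr rfl fun a _ => sum_comm).trans sum_comm)
end

section
/- For every k ∈ ℕ and every formal power series f over a commutative ring R, the identity (δ_k ⊙ (f_k)*) · x^k = (δ_k · x^k) ⊙ (f* · S_k) holds, where f_k is the series f shifted by k, * denotes the inverse binomial modulo 2 transform (and f* = (f_0)*), and S_k is the k-th Sierpiński polynomial. -/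
/-- `f_k`: the power series `f` shifted by `k`, i.e. `Σ_{n≥0} f[k+n] x^n`. -/
noncomputable def shiftS {R : Type*} [CommRing R] (k : ℕ) (f : PowerSeries R) : PowerSeries R :=
  PowerSeries.mk fun n => PowerSeries.coeff (k + n) f

/-- The inverse binomial modulo 2 transform:
`f*[n] = Σ_{0≤k≤n, (n-k) AND k = 0} σ_{n-k}·f[k]`. -/
noncomputable def bmtInv {R : Type*} [CommRing R] (f : PowerSeries R) : PowerSeries R :=
  PowerSeries.mk fun n => ∑ k ∈ Finset.range (n + 1),
    if (n - k) &&& k = 0 then sgn R (n - k) * PowerSeries.coeff k f else 0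

/-!
Identify a natural number with the finite set of its binary digits. Then the inverse binomial
modulo 2 transform is the Möbius transform of the Boolean lattice,
`f*[A] = ∑_{s ⊆ A} (-1)^|A \ s| f[s]`, and `S_k = ∑_{t ⊆ K} x^t` where `K` is the digit set of `k`.
For `m AND k = 0`, with `M` the digit set of `m`, the coefficient of `x^(k+m)` on the right is
therefore `∑_{u ⊆ K} f*[M ∪ u]` (put `u = K \ t`). Summing a Möbius transform over all `u ⊆ K`
undoes it in the directions of `K`, which leaves `∑_{s ⊆ M} (-1)^|M \ s| f[s ∪ K]`: the `m`-th
coefficient of `(f_k)*`.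
-/

open Finset

namespace Nat

theorem sum_digits_two_eq_length_bitIndices_s15 (n : ℕ) :
    (digits 2 n).sum = n.bitIndices.length := by
  induction n using Nat.strong_induction_on with
  | _ n ih =>
    rcases n.eq_zero_or_pos with rfl | hn
    · simp
    rw [digits_def' one_lt_two hn, List.sum_cons, ih (n / 2) (by omega)]
    rcases n.even_or_odd' with ⟨q, rfl | rfl⟩
    · simp
    · simp [Nat.mul_add_div]; omega

theorem land_eq_zero_iff_disjoint_bitIndices {a b : ℕ} :
    a &&& b = 0 ↔ Disjoint a.bitIndices.toFinset b.bitIndices.toFinset := by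
  simp only [Finset.disjoint_left, List.mem_toFinset, mem_bitIndices]
  constructor
  · intro h i ha hb
    simpa [testBit_land, ha, hb] using congrArg (testBit · i) h
  · intro h
    apply eq_of_testBit_eq
    intro i
    simpa [testBit_land] using @h i

theorem bitIndices_toFinset_add {a b : ℕ} (h : a &&& b = 0) :
    (a + b).bitIndices.toFinset = a.bitIndices.toFinset ∪ b.bitIndices.toFinset := by
  conv_lhs => rw [← sum_toFinset_bitIndices_two_pow a, ← sum_toFinset_bitIndices_two_pow b,
    ← sum_union (land_eq_zero_iff_disjoint_bitIndices.1 h)]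
  exact toFinset_bitIndices_sum_two_pow _

theorem bitIndices_toFinset_sub {j n : ℕ} (h : j.bitIndices.toFinset ⊆ n.bitIndices.toFinset) :
    (n - j).bitIndices.toFinset = n.bitIndices.toFinset \ j.bitIndices.toFinset := by
  have hsum := sum_sdiff (f := fun i => 2 ^ i) h
  simp only [sum_toFinset_bitIndices_two_pow] at hsum
  rw [← toFinset_bitIndices_sum_two_pow (n.bitIndices.toFinset \ _)]
  congr 2
  omega

theorem sub_land_eq_zero_iff {j n : ℕ} (h : j ≤ n) :
    (n - j) &&& j = 0 ↔ j.bitIndices.toFinset ⊆ n.bitIndices.toFinset := by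
  constructor
  · intro hj
    rw [← Nat.sub_add_cancel h, bitIndices_toFinset_add hj]
    exact subset_union_right
  · intro hj
    rw [land_eq_zero_iff_disjoint_bitIndices, bitIndices_toFinset_sub hj]
    exact sdiff_disjoint

end Nat

section Moebius

variable {α R : Type*} [DecidableEq α] [CommRing R]

def subsetMoebius (g : Finset α → R) (A : Finset α) : R :=
  ∑ s ∈ A.powerset, (-1) ^ #(A \ s) * g s

theorem subsetMoebius_insert (g : Finset α → R) {a : α} {A : Finset α} (ha : a ∉ A) :
    subsetMoebius g (insert a A) =
      subsetMoebius (fun s => g (insert a s)) A - subsetMoebius g A := by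
  unfold subsetMoebius
  rw [sum_powerset_insert ha, add_comm, sub_eq_add_neg, ← sum_neg_distrib]
  congr 1
  · refine sum_congr rfl fun s _ => ?_
    rw [insert_sdiff_insert, sdiff_insert_of_notMem ha]
  · refine sum_congr rfl fun s hs => ?_
    have has : a ∉ s := fun h => ha (mem_powerset.1 hs h)
    rw [insert_sdiff_of_notMem _ has, card_insert_of_notMem (by simp [ha]), pow_succ]
    ring

theorem sum_powerset_subsetMoebius_union (g : Finset α → R) {M K : Finset α}
    (hMK : Disjoint M K) :
    ∑ u ∈ K.powerset, subsetMoebius g (M ∪ u) = subsetMoebius (fun s => g (s ∪ K)) M := by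
  induction K using Finset.induction_on generalizing g with
  | empty => simp
  | insert a K ha ih =>
    rw [disjoint_insert_right] at hMK
    have hins : ∀ u ∈ K.powerset, subsetMoebius g (M ∪ insert a u)
        = subsetMoebius (fun s => g (insert a s)) (M ∪ u) - subsetMoebius g (M ∪ u) := by
      intro u hu
      rw [union_insert, subsetMoebius_insert]
      exact fun h => (mem_union.1 h).elim hMK.1 fun h => ha (mem_powerset.1 hu h)
    rw [sum_powerset_insert ha, sum_congr rfl hins, sum_sub_distrib, add_sub_cancel, ih _ hMK.2]
    simp only [union_insert]

end Moebius

open PowerSeries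

section

variable {R : Type*} [CommRing R]

theorem sgn_eq_neg_one_pow_card (n : ℕ) : sgn R n = (-1) ^ #n.bitIndices.toFinset := by
  rw [sgn, Nat.sum_digits_two_eq_length_bitIndices_s15,
    List.toFinset_card_of_nodup Nat.bitIndices_nodup]

theorem coeff_bmtInv (f : PowerSeries R) (n : ℕ) :
    coeff n (bmtInv f) =
      subsetMoebius (fun s => coeff (∑ i ∈ s, 2 ^ i) f) n.bitIndices.toFinset := by
  have hfilter : (range (n + 1)).filter (fun j => (n - j) &&& j = 0) =
      n.bitIndices.toFinset.powerset.map equivBitIndices.symm.toEmbedding := by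
    ext j
    rw [mem_filter, mem_range, mem_map_equiv, Equiv.symm_symm, mem_powerset]
    refine ⟨fun ⟨hj, h⟩ => (Nat.sub_land_eq_zero_iff (by omega)).1 h, fun h => ?_⟩
    have hjn : j ≤ n := by
      simpa using sum_le_sum_of_subset (f := fun i : ℕ => (2 : ℕ) ^ i) h
    exact ⟨by omega, (Nat.sub_land_eq_zero_iff hjn).2 h⟩
  rw [bmtInv, coeff_mk, ← sum_filter, hfilter, sum_map, subsetMoebius]
  refine sum_congr rfl fun s hs => ?_
  have hs' : (∑ i ∈ s, 2 ^ i).bitIndices.toFinset ⊆ n.bitIndices.toFinset := by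
    simpa using hs
  simp [sgn_eq_neg_one_pow_card, Nat.bitIndices_toFinset_sub hs']

theorem Sier_eq_sum_powerset (k : ℕ) :
    Sier R k = ∑ t ∈ k.bitIndices.toFinset.powerset, Polynomial.X ^ (∑ i ∈ t, 2 ^ i) := by
  have hbits : (range (k + 1)).filter (k.testBit ·) = k.bitIndices.toFinset := by
    ext j
    simp only [mem_filter, mem_range, List.mem_toFinset, Nat.mem_bitIndices, and_iff_right_iff_imp]
    intro hj
    have := Nat.two_pow_le_of_mem_bitIndices (Nat.mem_bitIndices.2 hj)
    have := j.lt_two_pow_self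
    omega
  rw [Sier, ← prod_filter, hbits, prod_one_add]
  simp_rw [prod_pow_eq_pow_sum]

theorem coeff_bmtInv_shiftS_of_land_eq_zero {f : PowerSeries R} {k m : ℕ} (hmk : m &&& k = 0) :
    coeff m (bmtInv (shiftS k f)) = coeff (k + m) (bmtInv f * (Sier R k : PowerSeries R)) := by
  set M := m.bitIndices.toFinset
  set K := k.bitIndices.toFinset
  have hMK : Disjoint M K := Nat.land_eq_zero_iff_disjoint_bitIndices.1 hmk
  have hK : ∑ i ∈ K, 2 ^ i = k := sum_toFinset_bitIndices_two_pow k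
  have hM : ∑ i ∈ M, 2 ^ i = m := sum_toFinset_bitIndices_two_pow m
  calc coeff m (bmtInv (shiftS k f))
      = subsetMoebius (fun s => coeff (∑ i ∈ s ∪ K, 2 ^ i) f) M := by
        rw [coeff_bmtInv, subsetMoebius, subsetMoebius]
        refine sum_congr rfl fun s hs => ?_
        rw [shiftS, coeff_mk, sum_union (hMK.mono_left (mem_powerset.1 hs)), hK, add_comm]
    _ = ∑ u ∈ K.powerset, coeff (∑ i ∈ M ∪ u, 2 ^ i) (bmtInv f) := by
        rw [← sum_powerset_subsetMoebius_union (fun s => coeff (∑ i ∈ s, 2 ^ i) f) hMK]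
        simp [coeff_bmtInv]
    _ = ∑ t ∈ K.powerset, coeff (k + m - ∑ i ∈ t, 2 ^ i) (bmtInv f) := by
        refine sum_nbij' (K \ ·) (K \ ·) (by simp) (by simp)
          (fun u hu => Finset.sdiff_sdiff_eq_self (mem_powerset.1 hu))
          (fun t ht => Finset.sdiff_sdiff_eq_self (mem_powerset.1 ht)) fun u hu => ?_
        have hu := mem_powerset.1 hu
        have := sum_sdiff (f := fun i : ℕ => (2 : ℕ) ^ i) hu
        rw [sum_union (hMK.mono_right hu), hM]
        congr 2
        omega
    _ = coeff (k + m) (bmtInv f * (Sier R k : PowerSeries R)) := by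
        rw [Sier_eq_sum_powerset, ← Polynomial.coeToPowerSeries.ringHom_apply, map_sum, mul_sum,
          map_sum]
        refine sum_congr rfl fun t ht => ?_
        rw [map_pow, Polynomial.coeToPowerSeries.ringHom_apply, Polynomial.coe_X,
          coeff_mul_X_pow', if_pos]
        have := sum_le_sum_of_subset (f := fun i : ℕ => (2 : ℕ) ^ i) (mem_powerset.1 ht)
        rw [sum_toFinset_bitIndices_two_pow] at this
        omega

end

/-- For every k and power series f,
(δ k ⊙ (f_k)*) * x^k = (δ k * x^k) ⊙ (f* * S k). -/
theorem delta_had_bmtInv_shift (R : Type*) [CommRing R] (k : ℕ) (f : PowerSeries R) :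
    hadS (delta R k) (bmtInv (shiftS k f)) * PowerSeries.X ^ k =
      hadS (delta R k * PowerSeries.X ^ k) (bmtInv f * (Sier R k : PowerSeries R)) := by
  ext n
  simp only [hadS, delta, coeff_mk, coeff_mul_X_pow']
  by_cases hkn : k ≤ n
  · obtain ⟨m, rfl⟩ := Nat.exists_eq_add_of_le hkn
    simp only [hkn, if_true, Nat.add_sub_cancel_left]
    by_cases hmk : m &&& k = 0
    · rw [if_pos hmk, one_mul, one_mul, coeff_bmtInv_shiftS_of_land_eq_zero hmk]
    · rw [if_neg hmk, zero_mul, zero_mul]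
  · simp [hkn]
end
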